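/- For any s > 0, g_s(λ) > 1 for all λ > 0, g_s(λ) → 1 as λ → ∞, and g_s(λ) → ∞ as λ → 0⁺; consequently g_s is a bijection from (0,∞) onto (1,∞). -/

import Mathlib

/-!
The `m = 0` term is `1` and the others are positive, so `g_s > 1`. For the tail,
`1 + λ(n+1) ≥ λ(n+1)` bounds the `(n+1)`-st term by `λ^{-s} (n+1)^{-(1+s)}`; this gives
summability and `g_s(λ) ≤ 1 + C λ^{-s}`, hence `g_s → 1` at infinity. At `λ = 0` the terms are
those of the harmonic series, and finite partial sums are continuous on `[0, ∞)`, so `g_s` blows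
up at `0⁺`. Each term decreases in `λ` (strictly for `m ≥ 1`), and on `[c, ∞)` the series is
dominated by `g_s(c)`, so `g_s` is continuous and strictly decreasing; the intermediate value
theorem gives surjectivity onto `(1, ∞)`.
-/

open Filter Set Topology

theorem summable_nat_add_one_rpow {p : ℝ} (hp : p < -1) :
    Summable fun n : ℕ => ((n : ℝ) + 1) ^ p := by
  simpa using (summable_nat_add_iff 1).2 (Real.summable_nat_rpow.2 hp)

theorem surjOn_Ioi_of_tendsto {α δ : Type*} [ConditionallyCompleteLinearOrder α]
    [TopologicalSpace α] [OrderTopology α] [DenselyOrdered α] [NoMaxOrder α]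
    [LinearOrder δ] [TopologicalSpace δ] [OrderClosedTopology δ]
    {f : α → δ} {a : α} {b : δ} (hf : ContinuousOn f (Ioi a))
    (hleft : Tendsto f (𝓝[>] a) atTop) (hright : Tendsto f atTop (𝓝 b)) :
    SurjOn f (Ioi a) (Ioi b) := by
  intro y (hy : b < y)
  obtain ⟨q, hqa, hqy⟩ :=
    ((eventually_gt_atTop a).and (hright.eventually (eventually_lt_nhds hy))).exists
  obtain ⟨p, ⟨hyp, hpq⟩, hap⟩ := (((hleft.eventually (eventually_ge_atTop y)).and
    (eventually_nhdsWithin_of_eventually_nhds (eventually_lt_nhds hqa))).and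
    self_mem_nhdsWithin).exists
  have hsub : Icc p q ⊆ Ioi a := fun z hz => lt_of_lt_of_le hap hz.1
  obtain ⟨c, hc, rfl⟩ := intermediate_value_Icc' hpq.le (hf.mono hsub) ⟨hqy.le, hyp⟩
  exact ⟨c, hsub hc, rfl⟩

noncomputable def gsTerm (s lam : ℝ) (m : ℕ) : ℝ := 1 / ((1 + (m : ℝ)) * (1 + lam * m) ^ s)

noncomputable def gs (s lam : ℝ) : ℝ := ∑' m : ℕ, gsTerm s lam m

section

variable {s lam : ℝ}

@[simp]
theorem gsTerm_zero (s lam : ℝ) : gsTerm s lam 0 = 1 := by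
  simp [gsTerm]

theorem gsTerm_lam_zero (s : ℝ) (m : ℕ) : gsTerm s 0 m = 1 / ((m : ℝ) + 1) := by
  simp [gsTerm, add_comm]

theorem gsTerm_pos (hlam : 0 ≤ lam) (m : ℕ) : 0 < gsTerm s lam m := by
  have : 0 < 1 + lam * m := by positivity
  unfold gsTerm
  positivity

theorem gsTerm_antitoneOn (hs : 0 ≤ s) (m : ℕ) :
    AntitoneOn (fun lam => gsTerm s lam m) (Ici 0) := by
  intro a (ha : 0 ≤ a) b _ hab
  have : 0 < 1 + a * m := by positivity
  simp only [gsTerm]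
  gcongr

theorem gsTerm_strictAntiOn (hs : 0 < s) {m : ℕ} (hm : 0 < m) :
    StrictAntiOn (fun lam => gsTerm s lam m) (Ici 0) := by
  intro a (ha : 0 ≤ a) b _ hab
  have : 0 < 1 + a * m := by positivity
  simp only [gsTerm]
  gcongr

theorem continuousOn_gsTerm (s : ℝ) (m : ℕ) :
    ContinuousOn (fun lam => gsTerm s lam m) (Ici 0) := by
  intro lam (hlam : 0 ≤ lam)
  have : 0 < 1 + lam * m := by positivity
  refine ContinuousAt.continuousWithinAt (continuousAt_const.div (continuousAt_const.mul ?_) ?_)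
  · exact ContinuousAt.rpow_const (by fun_prop) (Or.inl this.ne')
  · positivity

theorem gsTerm_succ_le (hs : 0 ≤ s) (hlam : 0 < lam) (n : ℕ) :
    gsTerm s lam (n + 1) ≤ lam ^ (-s) * ((n : ℝ) + 1) ^ (-(1 + s)) := by
  have hn : (0 : ℝ) < n + 1 := by positivity
  calc gsTerm s lam (n + 1) ≤ 1 / (((n : ℝ) + 1) * (lam * (n + 1)) ^ s) := by
        unfold gsTerm; push_cast
        gcongr 1 / (?_ * ?_ ^ s) <;> linarith
    _ = lam ^ (-s) * ((n : ℝ) + 1) ^ (-(1 + s)) := by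
        rw [Real.rpow_neg hlam.le, Real.rpow_neg hn.le, Real.rpow_add hn, Real.rpow_one,
          Real.mul_rpow hlam.le hn.le]
        field_simp

theorem summable_gsTerm (hs : 0 < s) (hlam : 0 < lam) : Summable (gsTerm s lam) :=
  (summable_nat_add_iff 1).1 <| Summable.of_nonneg_of_le (fun _ => (gsTerm_pos hlam.le _).le)
    (gsTerm_succ_le hs.le hlam) ((summable_nat_add_one_rpow (by linarith)).mul_left _)

theorem gs_eq_one_add_tsum (hs : 0 < s) (hlam : 0 < lam) :
    gs s lam = 1 + ∑' n : ℕ, gsTerm s lam (n + 1) := by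
  rw [gs, (summable_gsTerm hs hlam).tsum_eq_zero_add, gsTerm_zero]

theorem one_lt_gs (hs : 0 < s) (hlam : 0 < lam) : 1 < gs s lam := by
  have htail : 0 < ∑' n : ℕ, gsTerm s lam (n + 1) :=
    ((summable_nat_add_iff 1).2 (summable_gsTerm hs hlam)).tsum_pos
      (fun _ => (gsTerm_pos hlam.le _).le) 0 (gsTerm_pos hlam.le _)
  rw [gs_eq_one_add_tsum hs hlam]
  linarith

theorem gs_le_one_add (hs : 0 < s) (hlam : 0 < lam) :
    gs s lam ≤ 1 + lam ^ (-s) * ∑' n : ℕ, ((n : ℝ) + 1) ^ (-(1 + s)) := by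
  rw [gs_eq_one_add_tsum hs hlam, ← tsum_mul_left]
  have htail := (summable_nat_add_iff 1).2 (summable_gsTerm hs hlam)
  exact (add_le_add_iff_left 1).2 <| htail.tsum_le_tsum (gsTerm_succ_le hs.le hlam)
    ((summable_nat_add_one_rpow (by linarith)).mul_left _)

theorem tendsto_gs_atTop (hs : 0 < s) : Tendsto (gs s) atTop (𝓝 1) := by
  set C := ∑' n : ℕ, ((n : ℝ) + 1) ^ (-(1 + s))
  have hupper : Tendsto (fun lam : ℝ => 1 + lam ^ (-s) * C) atTop (𝓝 1) := by
    simpa using tendsto_const_nhds.add ((tendsto_rpow_neg_atTop hs).mul_const C)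
  refine tendsto_of_tendsto_of_tendsto_of_le_of_le' tendsto_const_nhds hupper ?_ ?_
  · filter_upwards [eventually_gt_atTop 0] with lam hlam using (one_lt_gs hs hlam).le
  · filter_upwards [eventually_gt_atTop 0] with lam hlam using gs_le_one_add hs hlam

theorem strictAntiOn_gs (hs : 0 < s) : StrictAntiOn (gs s) (Ioi 0) := by
  intro a (ha : 0 < a) b (hb : 0 < b) hab
  exact Summable.tsum_lt_tsum_of_nonneg (i := 1) (fun m => (gsTerm_pos hb.le m).le)
    (fun m => gsTerm_antitoneOn hs.le m ha.le hb.le hab.le)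
    (gsTerm_strictAntiOn hs one_pos ha.le hb.le hab) (summable_gsTerm hs ha)

theorem continuousOn_gs_Ici (hs : 0 < s) {c : ℝ} (hc : 0 < c) : ContinuousOn (gs s) (Ici c) :=
  continuousOn_tsum (fun m => (continuousOn_gsTerm s m).mono (Ici_subset_Ici.2 hc.le))
    (summable_gsTerm hs hc) fun m lam (hlam : c ≤ lam) => by
      rw [Real.norm_of_nonneg (gsTerm_pos (hc.le.trans hlam) m).le]
      exact gsTerm_antitoneOn hs.le m hc.le (hc.le.trans hlam) hlam

theorem continuousOn_gs (hs : 0 < s) : ContinuousOn (gs s) (Ioi 0) := fun _ hlam =>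
  ((continuousOn_gs_Ici hs (half_pos hlam)).continuousAt
    (Ici_mem_nhds (half_lt_self hlam))).continuousWithinAt

theorem tendsto_gs_nhdsGT_zero (hs : 0 < s) : Tendsto (gs s) (𝓝[>] 0) atTop := by
  refine tendsto_atTop.2 fun b => ?_
  obtain ⟨N, hN⟩ := (tendsto_atTop.1 Real.tendsto_sum_range_one_div_nat_succ_atTop (b + 1)).exists
  have hpartial : Tendsto (fun lam => ∑ m ∈ Finset.range N, gsTerm s lam m) (𝓝[>] 0)
      (𝓝 (∑ m ∈ Finset.range N, 1 / ((m : ℝ) + 1))) := by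
    have := (continuousOn_finsetSum (Finset.range N) fun m _ => continuousOn_gsTerm s m) 0
      self_mem_Ici
    simpa only [gsTerm_lam_zero] using this.mono_left (nhdsWithin_mono _ Ioi_subset_Ici_self)
  filter_upwards [hpartial.eventually (eventually_gt_nhds (by linarith : b < _)),
    self_mem_nhdsWithin] with lam hb (hlam : 0 < lam)
  exact hb.le.trans <|
    (summable_gsTerm hs hlam).sum_le_tsum _ fun m _ => (gsTerm_pos hlam.le m).le

end

theorem gs_bijection (s : ℝ) (hs : 0 < s)
    (g : ℝ → ℝ)
    (hg : ∀ lam : ℝ, g lam = ∑' m : ℕ, 1 / ((1 + (m : ℝ)) * (1 + lam * m) ^ s)) :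
    (∀ lam : ℝ, 0 < lam → 1 < g lam) ∧
    Tendsto g atTop (nhds 1) ∧
    Tendsto g (nhdsWithin 0 (Set.Ioi 0)) atTop ∧
    Set.BijOn g (Set.Ioi (0 : ℝ)) (Set.Ioi (1 : ℝ)) := by
  obtain rfl : g = gs s := funext hg
  have hgt : ∀ lam : ℝ, 0 < lam → 1 < gs s lam := fun _ => one_lt_gs hs
  refine ⟨hgt, tendsto_gs_atTop hs, tendsto_gs_nhdsGT_zero hs, hgt, (strictAntiOn_gs hs).injOn,
    surjOn_Ioi_of_tendsto (continuousOn_gs hs) (tendsto_gs_nhdsGT_zero hs) (tendsto_gs_atTop hs)⟩
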